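/- arXiv:1810.10313 — 4 statements merged into one kernel-verified Lean document; each statement's English description precedes it below -/
import Mathlib

section
/- Let H, F be real Hilbert spaces, E : H → H* the Riesz isomorphism of a bounded coercive symmetric bilinear form, N : F → H* bounded linear and injective, and j ∈ H*. If (V, f, Π) solves the saddle point system E V + E Π = −j, N* Π = 0, E V − N f = 0, and additionally j = N g for some g ∈ F, then Π = 0 and V = −E^{-1} j. -/
/-! The functionals `j = N g` and `E V = N f` both lie in the range of `N`, so by the first
equation `E Π = -N (g + f)` does too. Functionals in the range of `N` vanish on `ker N*`, where
`Π` lies, so `E Π Π = 0` and coercivity forces `Π = 0`; the first equation then reads `E V = -j`. -/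

open scoped InnerProductSpace

theorem eq_zero_of_coercive_of_apply_self_nonpos {H : Type*} [NormedAddCommGroup H]
    {B : H → H → ℝ} {c : ℝ} (hc : 0 < c) (hcoer : ∀ v, c * ‖v‖ ^ 2 ≤ B v v) {v : H}
    (hv : B v v ≤ 0) : v = 0 := by
  have hnorm : c * ‖v‖ ^ 2 ≤ 0 := (hcoer v).trans hv
  have : ‖v‖ ^ 2 = 0 := le_antisymm (nonpos_of_mul_nonpos_right hnorm hc) (sq_nonneg _)
  exact norm_eq_zero.mp (pow_eq_zero_iff two_ne_zero |>.mp this)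

theorem apply_eq_zero_of_mem_ker_adjoint {H F : Type*} [NormedAddCommGroup F]
    [InnerProductSpace ℝ F] {N : F → H → ℝ} {Nstar : H → F}
    (hadj : ∀ f w, N f w = ⟪f, Nstar w⟫_ℝ) {w : H} (hw : Nstar w = 0) (f : F) :
    N f w = 0 := by
  rw [hadj, hw, inner_zero_right]

theorem saddle_point_multiplier_vanishes_general
    {H F : Type*}
    [NormedAddCommGroup H] [InnerProductSpace ℝ H]
    [NormedAddCommGroup F] [InnerProductSpace ℝ F]
    (E : H →L[ℝ] (H →L[ℝ] ℝ))
    (c : ℝ) (hc : 0 < c) (hcoer : ∀ v, c * ‖v‖ ^ 2 ≤ E v v)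
    (N : F →L[ℝ] (H →L[ℝ] ℝ))
    (Nstar : H →L[ℝ] F) (hadj : ∀ (f : F) (w : H), N f w = (inner ℝ f (Nstar w) : ℝ))
    (j : H →L[ℝ] ℝ) (V : H) (f : F) (P : H)
    (h1 : E V + E P = -j) (h2 : Nstar P = 0) (h3 : E V = N f)
    (hj : ∃ g : F, j = N g) :
    P = 0 ∧ E V = -j := by
  obtain ⟨g, rfl⟩ := hj
  have hEP : E P = -N (g + f) := by
    rw [map_add, neg_add, ← h3, ← h1]
    abel
  have hEPP : E P P ≤ 0 := by
    rw [hEP, neg_apply,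
      apply_eq_zero_of_mem_ker_adjoint (N := fun f w => N f w) hadj h2, neg_zero]
  have hP : P = 0 := eq_zero_of_coercive_of_apply_self_nonpos hc hcoer hEPP
  subst hP
  simpa using h1

/-- Let `H, F` be real Hilbert spaces, `E : H → H*` the Riesz
map of a bounded, coercive, symmetric bilinear form, `N : F → H*` bounded
linear and injective with adjoint `N* : H → F`, and `j ∈ H*`. If `(V, f, P)`
solves the saddle-point system `E V + E P = -j`, `N* P = 0`, `E V - N f = 0`,
and moreover `j = N g` for some `g ∈ F` (Hadamard structure), then `P = 0` and
`V = -E⁻¹ j` (i.e. `E V = -j`). -/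
theorem saddle_point_multiplier_vanishes
    {H F : Type*}
    [NormedAddCommGroup H] [InnerProductSpace ℝ H] [CompleteSpace H]
    [NormedAddCommGroup F] [InnerProductSpace ℝ F] [CompleteSpace F]
    (E : H →L[ℝ] (H →L[ℝ] ℝ))
    (c : ℝ) (hc : 0 < c) (hcoer : ∀ v, c * ‖v‖ ^ 2 ≤ E v v)
    (hsym : ∀ v w, E v w = E w v)
    (N : F →L[ℝ] (H →L[ℝ] ℝ)) (hN : Function.Injective N)
    (Nstar : H →L[ℝ] F) (hadj : ∀ (f : F) (w : H), N f w = (inner ℝ f (Nstar w) : ℝ))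
    (j : H →L[ℝ] ℝ) (V : H) (f : F) (P : H)
    (h1 : E V + E P = -j) (h2 : Nstar P = 0) (h3 : E V = N f)
    (hj : ∃ g : F, j = N g) :
    P = 0 ∧ E V = -j :=
  saddle_point_multiplier_vanishes_general E c hc hcoer N Nstar hadj j V f P h1 h2 h3 hj
end

section
/- Let H, F be real Hilbert spaces, E : H → H* the Riesz map of a coercive symmetric bounded bilinear form, N : F → H* bounded and injective, and j ∈ H*. If (V, f, Π) satisfies E V + E Π = −j, N* Π = 0, and E V = N f, then ⟨E V, V⟩ = −j(V). In particular, if V ≠ 0 then j(V) < 0, i.e., V is a descent direction for j. -/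
/-!
Testing `E V + E P = -j` against `V` gives `E V V + E P V = -j V`. By symmetry
`E P V = E V P = N f P = ⟪f, N* P⟫ = 0`, so `E V V = -j V`, and coercivity makes
`E V V` positive when `V ≠ 0`.
-/

theorem apply_eq_zero_of_adjoint_apply_eq_zero {H F : Type*}
    [NormedAddCommGroup H] [NormedSpace ℝ H]
    [NormedAddCommGroup F] [InnerProductSpace ℝ F]
    {N : F →L[ℝ] H →L[ℝ] ℝ} {Nstar : H → F}
    (hadj : ∀ (f : F) (w : H), N f w = inner ℝ f (Nstar w))
    (f : F) {P : H} (hP : Nstar P = 0) : N f P = 0 := by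
  rw [hadj, hP, inner_zero_right]

theorem apply_self_eq_neg_of_add_eq_neg {M : Type*}
    [NormedAddCommGroup M] [NormedSpace ℝ M]
    {E : M →L[ℝ] M →L[ℝ] ℝ} {j : M →L[ℝ] ℝ} {V P : M}
    (h : E V + E P = -j) (hPV : E P V = 0) : E V V = -j V := by
  simpa [hPV] using congr($h V)

theorem apply_self_pos_of_coercive {M : Type*} [NormedAddCommGroup M] [NormedSpace ℝ M]
    {E : M →L[ℝ] M →L[ℝ] ℝ} {c : ℝ} (hc : 0 < c) (hcoer : ∀ v, c * ‖v‖ ^ 2 ≤ E v v)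
    {v : M} (hv : v ≠ 0) : 0 < E v v :=
  (mul_pos hc (pow_pos (norm_pos_iff.mpr hv) 2)).trans_le (hcoer v)

theorem restricted_gradient_is_descent_direction_general
    {H F : Type*}
    [NormedAddCommGroup H] [InnerProductSpace ℝ H]
    [NormedAddCommGroup F] [InnerProductSpace ℝ F]
    (E : H →L[ℝ] (H →L[ℝ] ℝ))
    (c : ℝ) (hc : 0 < c) (hcoer : ∀ v, c * ‖v‖ ^ 2 ≤ E v v)
    (hsym : ∀ v w, E v w = E w v)
    (N : F →L[ℝ] (H →L[ℝ] ℝ))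
    (Nstar : H →L[ℝ] F) (hadj : ∀ (f : F) (w : H), N f w = (inner ℝ f (Nstar w) : ℝ))
    (j : H →L[ℝ] ℝ) (V : H) (f : F) (P : H)
    (h1 : E V + E P = -j) (h2 : Nstar P = 0) (h3 : E V = N f) :
    E V V = -(j V) ∧ (V ≠ 0 → j V < 0) := by
  have hPV : E P V = 0 := by
    rw [hsym, h3]
    exact apply_eq_zero_of_adjoint_apply_eq_zero hadj f h2
  have hVV : E V V = -j V := apply_self_eq_neg_of_add_eq_neg h1 hPV
  refine ⟨hVV, fun hV => ?_⟩
  linarith [apply_self_pos_of_coercive hc hcoer hV]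

/-- Let `H, F` be real Hilbert spaces, `E : H → H*` the Riesz
map of a coercive, symmetric, bounded bilinear form, `N : F → H*` bounded and
injective with adjoint `N*`, and `j ∈ H*`. If `(V, f, P)` satisfies
`E V + E P = -j`, `N* P = 0` and `E V = N f`, then `⟨E V, V⟩ = -j(V)`; in
particular if `V ≠ 0` then `j(V) < 0`, i.e. `V` is a descent direction. -/
theorem restricted_gradient_is_descent_direction
    {H F : Type*}
    [NormedAddCommGroup H] [InnerProductSpace ℝ H] [CompleteSpace H]
    [NormedAddCommGroup F] [InnerProductSpace ℝ F] [CompleteSpace F]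
    (E : H →L[ℝ] (H →L[ℝ] ℝ))
    (c : ℝ) (hc : 0 < c) (hcoer : ∀ v, c * ‖v‖ ^ 2 ≤ E v v)
    (hsym : ∀ v w, E v w = E w v)
    (N : F →L[ℝ] (H →L[ℝ] ℝ)) (hN : Function.Injective N)
    (Nstar : H →L[ℝ] F) (hadj : ∀ (f : F) (w : H), N f w = (inner ℝ f (Nstar w) : ℝ))
    (j : H →L[ℝ] ℝ) (V : H) (f : F) (P : H)
    (h1 : E V + E P = -j) (h2 : Nstar P = 0) (h3 : E V = N f) :
    E V V = -(j V) ∧ (V ≠ 0 → j V < 0) :=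
  restricted_gradient_is_descent_direction_general E c hc hcoer hsym N Nstar hadj j V f P h1 h2 h3
end

section
/- Let H, F be Hilbert spaces, E : H → H* the Riesz map of a coercive symmetric bounded bilinear form a, N : F → H* bounded linear, and g ∈ H. Then V = 0 together with f = 0 solves: minimize ½ a(V − g, V − g) subject to E V = N f, if and only if ⟨N f', g⟩ = 0 for all f' ∈ F. -/
/-!
Write the constraint `a(V, ·) = N f` and expand the energy: for an admissible `(V, f)`,
`a(V - g, V - g) - a(g, g) = a(V, V) - 2 ⟨N f, g⟩`. If `N f' g = 0` for every `f'` this is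
`a(V, V) ≥ 0`. Conversely, Lax–Milgram gives for each `f'` a solution `V` of
`a(V, ·) = N f'`; the admissible line `t ↦ (t V, t f')` turns minimality into
`t² a(V, V) - 2 t ⟨N f', g⟩ ≥ 0` for all real `t`, which forces `⟨N f', g⟩ = 0`.
-/

theorem eq_zero_of_forall_mul_mul_add_mul_nonneg {K : Type*} [Field K] [LinearOrder K]
    [IsStrictOrderedRing K] {a b : K} (h : ∀ t : K, 0 ≤ a * (t * t) + b * t) : b = 0 := by
  have hdiscrim := discrim_le_zero (c := (0 : K)) (by simpa using h)
  rw [discrim, mul_zero, sub_zero] at hdiscrim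
  exact pow_eq_zero_iff two_ne_zero |>.mp (le_antisymm hdiscrim (sq_nonneg b))

theorem LinearMap.apply_sub_sub_of_symm {R M : Type*} [CommRing R] [AddCommGroup M] [Module R M]
    (a : M →ₗ[R] M →ₗ[R] R) (hsym : ∀ v w, a v w = a w v) (v g : M) :
    a (v - g) (v - g) = a v v - 2 * a v g + a g g := by
  simp only [map_sub, LinearMap.sub_apply, hsym g v]
  ring

theorem IsCoercive.exists_apply_eq {H : Type*} [NormedAddCommGroup H] [InnerProductSpace ℝ H]
    [CompleteSpace H] {B : H →L[ℝ] H →L[ℝ] ℝ} (hB : IsCoercive B) (φ : H →L[ℝ] ℝ) :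
    ∃ v, B v = φ := by
  refine ⟨hB.continuousLinearEquivOfBilin.symm ((InnerProductSpace.toDual ℝ H).symm φ), ?_⟩
  ext w
  rw [← hB.continuousLinearEquivOfBilin_apply, ContinuousLinearEquiv.apply_symm_apply,
    InnerProductSpace.toDual_symm_apply]

theorem LinearMap.exists_forall_apply_eq_of_coercive {H : Type*} [NormedAddCommGroup H]
    [InnerProductSpace ℝ H] [CompleteSpace H] (a : H →ₗ[ℝ] H →ₗ[ℝ] ℝ)
    (hbdd : ∃ M : ℝ, ∀ v w, |a v w| ≤ M * ‖v‖ * ‖w‖)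
    {c : ℝ} (hc : 0 < c) (hcoer : ∀ v, c * ‖v‖ ^ 2 ≤ a v v) (φ : H →L[ℝ] ℝ) :
    ∃ v, ∀ w, a v w = φ w := by
  obtain ⟨M, hM⟩ := hbdd
  let B : H →L[ℝ] H →L[ℝ] ℝ := a.mkContinuous₂ M fun v w => hM v w
  have hB : IsCoercive B := ⟨c, hc, fun v => by simpa [B, mul_assoc, sq] using hcoer v⟩
  obtain ⟨v, hv⟩ := hB.exists_apply_eq φ
  exact ⟨v, fun w => congr($hv w)⟩

theorem stationarity_characterization_general
    {H F : Type*}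
    [NormedAddCommGroup H] [InnerProductSpace ℝ H] [CompleteSpace H]
    [NormedAddCommGroup F] [InnerProductSpace ℝ F]
    (a : H →ₗ[ℝ] H →ₗ[ℝ] ℝ)
    (hsym : ∀ v w, a v w = a w v)
    (hbdd : ∃ M : ℝ, ∀ v w, |a v w| ≤ M * ‖v‖ * ‖w‖)
    (c : ℝ) (hc : 0 < c) (hcoer : ∀ v, c * ‖v‖ ^ 2 ≤ a v v)
    (N : F →L[ℝ] (H →L[ℝ] ℝ))
    (g : H) :
    (∀ (V : H) (f : F), (∀ w, a V w = N f w) →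
        (1 / 2) * a ((0 : H) - g) ((0 : H) - g) ≤ (1 / 2) * a (V - g) (V - g)) ↔
      (∀ f' : F, N f' g = 0) := by
  have energy_gap (V : H) :
      a (V - g) (V - g) - a ((0 : H) - g) ((0 : H) - g) = a V V - 2 * a V g := by
    rw [a.apply_sub_sub_of_symm hsym, a.apply_sub_sub_of_symm hsym]
    simp
  constructor
  · intro hmin f'
    obtain ⟨V, hV⟩ := a.exists_forall_apply_eq_of_coercive hbdd hc hcoer (N f')
    rw [← hV g]
    suffices h : -2 * a V g = 0 by linarith
    refine eq_zero_of_forall_mul_mul_add_mul_nonneg (a := a V V) fun t => ?_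
    have hmin_t := hmin (t • V) (t • f') fun w => by simp [hV]
    have hgap := energy_gap (t • V)
    simp only [map_smul, LinearMap.smul_apply, smul_eq_mul] at hgap
    nlinarith
  · intro horth V f hVf
    have hVV : 0 ≤ a V V := le_trans (by positivity) (hcoer V)
    have hgap := energy_gap V
    rw [hVf g, horth f] at hgap
    linarith

/-- Let `H, F` be Hilbert spaces, `a` a coercive, symmetric,
bounded bilinear form on `H` (with Riesz map `E`, so the constraint `E V = N f`
reads `a(V, ·) = ⟨N f, ·⟩`), `N : F → H*` bounded linear and `g ∈ H`. Then the
pair `(V, f) = (0, 0)` minimizes `½ a(V - g, V - g)` subject to `E V = N f` if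
and only if `⟨N f', g⟩ = 0` for all `f' ∈ F`. -/
theorem stationarity_characterization
    {H F : Type*}
    [NormedAddCommGroup H] [InnerProductSpace ℝ H] [CompleteSpace H]
    [NormedAddCommGroup F] [InnerProductSpace ℝ F] [CompleteSpace F]
    (a : H →ₗ[ℝ] H →ₗ[ℝ] ℝ)
    (hsym : ∀ v w, a v w = a w v)
    (hbdd : ∃ M : ℝ, ∀ v w, |a v w| ≤ M * ‖v‖ * ‖w‖)
    (c : ℝ) (hc : 0 < c) (hcoer : ∀ v, c * ‖v‖ ^ 2 ≤ a v v)
    (N : F →L[ℝ] (H →L[ℝ] ℝ))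
    (g : H) :
    (∀ (V : H) (f : F), (∀ w, a V w = N f w) →
        (1 / 2) * a ((0 : H) - g) ((0 : H) - g) ≤ (1 / 2) * a (V - g) (V - g)) ↔
      (∀ f' : F, N f' g = 0) :=
  stationarity_characterization_general a hsym hbdd c hc hcoer N g
end

section
/- Let Ω ⊆ ℝ^d be open and bounded, and define the bilinear form a(V, W) = ∫_Ω 2μ ε(V):ε(W) + λ tr(ε(V)) tr(ε(W)) + δ V·W dx on H^1(Ω)^d, where ε(V) = (DV + DVᵀ)/2. If μ > 0, dλ + 2μ > 0 and δ > 0, then a is symmetric, bounded, and coercive on H^1(Ω)^d: there exists c > 0 with a(V,V) ≥ c‖V‖²_{H^1(Ω)^d}. -/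
/-!
Coercivity is pointwise: since `(tr ε)² ≤ d |ε|²`, the integrand of `a(V, V)` dominates
`min(2μ, 2μ + dλ) |ε(V)|² + δ |V|²` whatever the sign of `λ`, and Korn's inequality turns the
integral of the latter into a multiple of `‖V‖²_{H¹}`. Boundedness comes from the pointwise bound
`|integrand| ≤ (2|μ| + d|λ| + |δ|) h(V) h(W)`, where `h(V)² = |V|² + |DV|²` dominates both
`|ε(V)|²` and `|V|²`, followed by the Cauchy–Schwarz inequality in `L²(Ω)`.
-/

open MeasureTheory

noncomputable section

/-- The Jacobian matrix `(DV)_{ij} = ∂_j V_i` of a vector field. -/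
def Dmat {d : ℕ} (V : EuclideanSpace ℝ (Fin d) → EuclideanSpace ℝ (Fin d))
    (x : EuclideanSpace ℝ (Fin d)) : Matrix (Fin d) (Fin d) ℝ :=
  fun i j => fderiv ℝ V x (EuclideanSpace.single j 1) i

/-- The linearized strain tensor `ε(V) = (DV + DVᵀ)/2`. -/
def strain {d : ℕ} (V : EuclideanSpace ℝ (Fin d) → EuclideanSpace ℝ (Fin d))
    (x : EuclideanSpace ℝ (Fin d)) : Matrix (Fin d) (Fin d) ℝ :=
  fun i j => (Dmat V x i j + Dmat V x j i) / 2

/-- Squared Frobenius norm of a matrix. -/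
def frobSq {d : ℕ} (A : Matrix (Fin d) (Fin d) ℝ) : ℝ := ∑ i, ∑ j, (A i j) ^ 2

/-- Frobenius inner product `A : B` of matrices. -/
def frobIp {d : ℕ} (A B : Matrix (Fin d) (Fin d) ℝ) : ℝ := ∑ i, ∑ j, A i j * B i j

/-- The squared `H^1(Ω)^d` norm of a vector field. -/
def h1Sq {d : ℕ} (Ω : Set (EuclideanSpace ℝ (Fin d)))
    (V : EuclideanSpace ℝ (Fin d) → EuclideanSpace ℝ (Fin d)) : ℝ :=
  ∫ x in Ω, (‖V x‖ ^ 2 + frobSq (Dmat V x))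

/-- Admissible vector fields: differentiable with `H^1(Ω)`-integrability. -/
def Adm {d : ℕ} (Ω : Set (EuclideanSpace ℝ (Fin d)))
    (V : EuclideanSpace ℝ (Fin d) → EuclideanSpace ℝ (Fin d)) : Prop :=
  Differentiable ℝ V ∧
    Integrable (fun x => ‖V x‖ ^ 2 + frobSq (Dmat V x)) (volume.restrict Ω)

/-- The linear elasticity bilinear form
`a(V,W) = ∫_Ω 2μ ε(V):ε(W) + λ tr(ε(V)) tr(ε(W)) + δ V·W dx`. -/
def elasticityForm {d : ℕ} (Ω : Set (EuclideanSpace ℝ (Fin d)))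
    (mu lam del : ℝ)
    (V W : EuclideanSpace ℝ (Fin d) → EuclideanSpace ℝ (Fin d)) : ℝ :=
  ∫ x in Ω,
    (2 * mu * frobIp (strain V x) (strain W x)
      + lam * (∑ i, strain V x i i) * (∑ i, strain W x i i)
      + del * (inner ℝ (V x) (W x) : ℝ))

section MatrixInequalities

variable {d : ℕ} (A B : Matrix (Fin d) (Fin d) ℝ)

lemma frobSq_nonneg : 0 ≤ frobSq A :=
  Finset.sum_nonneg fun _ _ => Finset.sum_nonneg fun _ _ => sq_nonneg _

lemma frobIp_self : frobIp A A = frobSq A := by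
  simp only [frobIp, frobSq, sq]

lemma frobIp_comm : frobIp A B = frobIp B A := by
  simp only [frobIp, mul_comm]

lemma abs_frobIp_le : |frobIp A B| ≤ √(frobSq A) * √(frobSq B) := by
  rw [← Real.sqrt_mul (frobSq_nonneg A), ← Real.sqrt_sq_eq_abs]
  refine Real.sqrt_le_sqrt ?_
  simp only [frobIp, frobSq, ← Finset.sum_product', Finset.univ_product_univ]
  exact Finset.sum_mul_sq_le_sq_mul_sq _ _ _

lemma sq_trace_le : (∑ i, A i i) ^ 2 ≤ d * frobSq A :=
  calc (∑ i, A i i) ^ 2 ≤ d * ∑ i, A i i ^ 2 := by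
        simpa using sq_sum_le_card_mul_sum_sq (s := Finset.univ) (f := fun i => A i i)
    _ ≤ d * frobSq A := by
        refine mul_le_mul_of_nonneg_left (Finset.sum_le_sum fun i _ => ?_) (Nat.cast_nonneg d)
        exact Finset.single_le_sum (f := fun j => A i j ^ 2) (fun j _ => sq_nonneg _)
          (Finset.mem_univ i)

lemma abs_trace_mul_trace_le :
    |(∑ i, A i i) * ∑ i, B i i| ≤ d * (√(frobSq A) * √(frobSq B)) := by
  have abs_trace_le (A : Matrix (Fin d) (Fin d) ℝ) : |∑ i, A i i| ≤ √d * √(frobSq A) := by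
    rw [← Real.sqrt_mul (Nat.cast_nonneg d), ← Real.sqrt_sq_eq_abs]
    exact Real.sqrt_le_sqrt (sq_trace_le A)
  calc |(∑ i, A i i) * ∑ i, B i i| = |∑ i, A i i| * |∑ i, B i i| := abs_mul _ _
    _ ≤ (√d * √(frobSq A)) * (√d * √(frobSq B)) :=
        mul_le_mul (abs_trace_le A) (abs_trace_le B) (abs_nonneg _) (by positivity)
    _ = d * (√(frobSq A) * √(frobSq B)) := by
        rw [mul_mul_mul_comm, Real.mul_self_sqrt (Nat.cast_nonneg d)]

lemma frobSq_symmPart_le : frobSq (fun i j => (A i j + A j i) / 2) ≤ frobSq A :=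
  calc frobSq (fun i j => (A i j + A j i) / 2) ≤ ∑ i, ∑ j, (A i j ^ 2 + A j i ^ 2) / 2 := by
        refine Finset.sum_le_sum fun i _ => Finset.sum_le_sum fun j _ => ?_
        nlinarith [sq_nonneg (A i j - A j i)]
    _ = frobSq A := by
        simp only [add_div, Finset.sum_add_distrib, frobSq]
        rw [Finset.sum_comm (f := fun i j => A j i ^ 2 / 2), ← Finset.sum_add_distrib]
        simp only [← Finset.sum_add_distrib, add_halves]

lemma min_mul_frobSq_le (mu lam : ℝ) :
    min (2 * mu) (2 * mu + d * lam) * frobSq A ≤ 2 * mu * frobSq A + lam * (∑ i, A i i) ^ 2 := by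
  rcases le_or_gt 0 lam with hlam | hlam
  · nlinarith [min_le_left (2 * mu) (2 * mu + d * lam), frobSq_nonneg A]
  · nlinarith [min_le_right (2 * mu) (2 * mu + d * lam), frobSq_nonneg A,
      mul_le_mul_of_nonpos_left (sq_trace_le A) hlam.le]

end MatrixInequalities

section Densities

variable {d : ℕ} (mu lam del : ℝ) (V W : EuclideanSpace ℝ (Fin d) → EuclideanSpace ℝ (Fin d))
  (x : EuclideanSpace ℝ (Fin d))

def elasticityDensity : ℝ :=
  2 * mu * frobIp (strain V x) (strain W x)
    + lam * (∑ i, strain V x i i) * (∑ i, strain W x i i)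
    + del * (inner ℝ (V x) (W x) : ℝ)

def h1Density : ℝ := ‖V x‖ ^ 2 + frobSq (Dmat V x)

lemma elasticityForm_eq_integral (Ω : Set (EuclideanSpace ℝ (Fin d))) :
    elasticityForm Ω mu lam del V W = ∫ x in Ω, elasticityDensity mu lam del V W x :=
  rfl

lemma h1Sq_eq_integral (Ω : Set (EuclideanSpace ℝ (Fin d))) :
    h1Sq Ω V = ∫ x in Ω, h1Density V x :=
  rfl

lemma elasticityDensity_comm :
    elasticityDensity mu lam del V W x = elasticityDensity mu lam del W V x := by
  simp only [elasticityDensity, frobIp_comm (strain V x), real_inner_comm (V x)]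
  ring

lemma h1Density_nonneg : 0 ≤ h1Density V x :=
  add_nonneg (sq_nonneg _) (frobSq_nonneg _)

lemma sq_norm_le_h1Density : ‖V x‖ ^ 2 ≤ h1Density V x :=
  le_add_of_nonneg_right (frobSq_nonneg _)

lemma frobSq_strain_le_h1Density : frobSq (strain V x) ≤ h1Density V x :=
  (frobSq_symmPart_le (Dmat V x)).trans (le_add_of_nonneg_left (sq_nonneg _))

lemma abs_elasticityDensity_le :
    |elasticityDensity mu lam del V W x| ≤
      (2 * |mu| + d * |lam| + |del|) * (√(h1Density V x) * √(h1Density W x)) := by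
  set P := √(h1Density V x) * √(h1Density W x)
  have hstrain : √(frobSq (strain V x)) * √(frobSq (strain W x)) ≤ P :=
    mul_le_mul (Real.sqrt_le_sqrt (frobSq_strain_le_h1Density V x))
      (Real.sqrt_le_sqrt (frobSq_strain_le_h1Density W x)) (Real.sqrt_nonneg _)
      (Real.sqrt_nonneg _)
  have hnorm : ‖V x‖ * ‖W x‖ ≤ P :=
    mul_le_mul (Real.le_sqrt_of_sq_le (sq_norm_le_h1Density V x))
      (Real.le_sqrt_of_sq_le (sq_norm_le_h1Density W x)) (norm_nonneg _) (Real.sqrt_nonneg _)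
  have hfrob := (abs_frobIp_le (strain V x) (strain W x)).trans hstrain
  have htrace := (abs_trace_mul_trace_le (strain V x) (strain W x)).trans
    (mul_le_mul_of_nonneg_left hstrain (Nat.cast_nonneg d))
  have hinner := (abs_real_inner_le_norm (V x) (W x)).trans hnorm
  calc |elasticityDensity mu lam del V W x|
      ≤ 2 * |mu| * |frobIp (strain V x) (strain W x)|
        + |lam| * |(∑ i, strain V x i i) * ∑ i, strain W x i i|
        + |del| * |(inner ℝ (V x) (W x) : ℝ)| := by
        refine (abs_add_three _ _ _).trans_eq ?_
        simp only [abs_mul, mul_assoc, abs_two]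
    _ ≤ 2 * |mu| * P + |lam| * (d * P) + |del| * P := by gcongr
    _ = (2 * |mu| + d * |lam| + |del|) * P := by ring

lemma elasticityDensity_self_ge :
    min (min (2 * mu) (2 * mu + d * lam)) del * (frobSq (strain V x) + ‖V x‖ ^ 2) ≤
      elasticityDensity mu lam del V V x := by
  set m := min (2 * mu) (2 * mu + d * lam)
  have hlame : m * frobSq (strain V x) ≤
      2 * mu * frobSq (strain V x) + lam * (∑ i, strain V x i i) ^ 2 :=
    min_mul_frobSq_le (strain V x) mu lam
  rw [elasticityDensity, frobIp_self, real_inner_self_eq_norm_sq, mul_assoc lam, ← sq, mul_add]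
  gcongr
  · exact (mul_le_mul_of_nonneg_right (min_le_left m del) (frobSq_nonneg _)).trans hlame
  · exact min_le_right m del

end Densities

section CauchySchwarz

variable {α : Type*} [MeasurableSpace α] {μ : Measure α} {F G : α → ℝ}

lemma MeasureTheory.Integrable.memLp_two_sqrt (hF : Integrable F μ) (hF0 : 0 ≤ᵐ[μ] F) :
    MemLp (fun x => √(F x)) 2 μ := by
  refine (memLp_two_iff_integrable_sq hF.aemeasurable.sqrt.aestronglyMeasurable).2 ?_
  refine hF.congr ?_
  filter_upwards [hF0] with x hx
  exact (Real.sq_sqrt hx).symm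

lemma integral_sqrt_mul_sqrt_le (hF : Integrable F μ) (hG : Integrable G μ)
    (hF0 : 0 ≤ᵐ[μ] F) (hG0 : 0 ≤ᵐ[μ] G) :
    ∫ x, √(F x) * √(G x) ∂μ ≤ √(∫ x, F x ∂μ) * √(∫ x, G x ∂μ) := by
  have hsq (H : α → ℝ) (hH0 : 0 ≤ᵐ[μ] H) : ∫ x, √(H x) ^ (2 : ℝ) ∂μ = ∫ x, H x ∂μ := by
    refine integral_congr_ae ?_
    filter_upwards [hH0] with x hx
    rw [Real.rpow_two, Real.sq_sqrt hx]
  have holder := integral_mul_le_Lp_mul_Lq_of_nonneg Real.HolderConjugate.two_two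
    (.of_forall fun x => Real.sqrt_nonneg (F x)) (.of_forall fun x => Real.sqrt_nonneg (G x))
    (by simpa using hF.memLp_two_sqrt hF0) (by simpa using hG.memLp_two_sqrt hG0)
  rwa [hsq F hF0, hsq G hG0, ← Real.sqrt_eq_rpow, ← Real.sqrt_eq_rpow] at holder

end CauchySchwarz

section ElasticityForm

variable {d : ℕ} (mu lam del : ℝ) {V W : EuclideanSpace ℝ (Fin d) → EuclideanSpace ℝ (Fin d)}
  {Ω : Set (EuclideanSpace ℝ (Fin d))}

@[fun_prop]
lemma measurable_Dmat_apply (V : EuclideanSpace ℝ (Fin d) → EuclideanSpace ℝ (Fin d))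
    (i j : Fin d) : Measurable fun x => Dmat V x i j :=
  (measurable_pi_apply i).comp
    ((WithLp.measurable_ofLp 2 _).comp (measurable_fderiv_apply_const ℝ V _))

lemma measurable_frobSq_strain : Measurable fun x => frobSq (strain V x) := by
  unfold frobSq strain
  fun_prop

lemma measurable_elasticityDensity (hV : Continuous V) (hW : Continuous W) :
    Measurable (elasticityDensity mu lam del V W) := by
  unfold elasticityDensity frobIp strain
  fun_prop

namespace Adm

lemma integrable_h1Density (hV : Adm Ω V) : Integrable (h1Density V) (volume.restrict Ω) :=
  hV.2

lemma integrable_sq_norm (hV : Adm Ω V) :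
    Integrable (fun x => ‖V x‖ ^ 2) (volume.restrict Ω) :=
  hV.integrable_h1Density.mono' (hV.1.continuous.norm.pow 2).aestronglyMeasurable <|
    .of_forall fun x => by
      rw [Real.norm_of_nonneg (sq_nonneg _)]
      exact sq_norm_le_h1Density V x

lemma integrable_frobSq_strain (hV : Adm Ω V) :
    Integrable (fun x => frobSq (strain V x)) (volume.restrict Ω) :=
  hV.integrable_h1Density.mono' measurable_frobSq_strain.aestronglyMeasurable <|
    .of_forall fun x => by
      rw [Real.norm_of_nonneg (frobSq_nonneg _)]
      exact frobSq_strain_le_h1Density V x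

lemma integrable_sqrt_mul_sqrt (hV : Adm Ω V) (hW : Adm Ω W) :
    Integrable (fun x => √(h1Density V x) * √(h1Density W x)) (volume.restrict Ω) :=
  (hV.integrable_h1Density.memLp_two_sqrt (.of_forall (h1Density_nonneg V))).integrable_mul
    (hW.integrable_h1Density.memLp_two_sqrt (.of_forall (h1Density_nonneg W)))

lemma integrable_elasticityDensity (hV : Adm Ω V) (hW : Adm Ω W) :
    Integrable (elasticityDensity mu lam del V W) (volume.restrict Ω) :=
  ((hV.integrable_sqrt_mul_sqrt hW).const_mul _).mono'
    (measurable_elasticityDensity mu lam del hV.1.continuous hW.1.continuous).aestronglyMeasurable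
    (.of_forall (abs_elasticityDensity_le mu lam del V W))

end Adm

lemma elasticityForm_comm (Ω : Set (EuclideanSpace ℝ (Fin d)))
    (V W : EuclideanSpace ℝ (Fin d) → EuclideanSpace ℝ (Fin d)) :
    elasticityForm Ω mu lam del V W = elasticityForm Ω mu lam del W V := by
  simp only [elasticityForm_eq_integral, elasticityDensity_comm mu lam del V W]

lemma abs_elasticityForm_le (hV : Adm Ω V) (hW : Adm Ω W) :
    |elasticityForm Ω mu lam del V W| ≤
      (2 * |mu| + d * |lam| + |del|) * √(h1Sq Ω V) * √(h1Sq Ω W) := by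
  set M := 2 * |mu| + d * |lam| + |del|
  rw [elasticityForm_eq_integral, h1Sq_eq_integral, h1Sq_eq_integral, mul_assoc]
  calc |∫ x in Ω, elasticityDensity mu lam del V W x|
      ≤ ∫ x in Ω, M * (√(h1Density V x) * √(h1Density W x)) :=
        (Real.norm_eq_abs _).symm.trans_le <|
          norm_integral_le_of_norm_le ((hV.integrable_sqrt_mul_sqrt hW).const_mul M)
            (.of_forall (abs_elasticityDensity_le mu lam del V W))
    _ = M * ∫ x in Ω, √(h1Density V x) * √(h1Density W x) := integral_const_mul _ _
    _ ≤ M * (√(∫ x in Ω, h1Density V x) * √(∫ x in Ω, h1Density W x)) :=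
        mul_le_mul_of_nonneg_left
          (integral_sqrt_mul_sqrt_le hV.integrable_h1Density hW.integrable_h1Density
            (.of_forall (h1Density_nonneg V)) (.of_forall (h1Density_nonneg W)))
          (by positivity)

lemma elasticityForm_self_ge (hV : Adm Ω V) :
    min (min (2 * mu) (2 * mu + d * lam)) del *
        ((∫ x in Ω, frobSq (strain V x)) + ∫ x in Ω, ‖V x‖ ^ 2) ≤
      elasticityForm Ω mu lam del V V := by
  have hint := hV.integrable_frobSq_strain.add hV.integrable_sq_norm
  rw [elasticityForm_eq_integral,
    ← integral_add hV.integrable_frobSq_strain hV.integrable_sq_norm, ← integral_const_mul]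
  exact integral_mono (hint.const_mul _) (hV.integrable_elasticityDensity mu lam del hV)
    (elasticityDensity_self_ge mu lam del V)

end ElasticityForm

theorem elasticity_form_symmetric_bounded_coercive_general {d : ℕ}
    (Ω : Set (EuclideanSpace ℝ (Fin d)))
    (mu lam del : ℝ) (hmu : 0 < mu) (hlam : 0 < (d : ℝ) * lam + 2 * mu)
    (hdel : 0 < del)
    (hKorn : ∃ C : ℝ, 0 < C ∧ ∀ V, Adm Ω V →
      h1Sq Ω V ≤ C * ((∫ x in Ω, frobSq (strain V x)) + ∫ x in Ω, ‖V x‖ ^ 2)) :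
    (∀ V W, elasticityForm Ω mu lam del V W = elasticityForm Ω mu lam del W V) ∧
    (∃ M : ℝ, ∀ V W, Adm Ω V → Adm Ω W →
      |elasticityForm Ω mu lam del V W| ≤
        M * Real.sqrt (h1Sq Ω V) * Real.sqrt (h1Sq Ω W)) ∧
    (∃ c : ℝ, 0 < c ∧ ∀ V, Adm Ω V →
      c * h1Sq Ω V ≤ elasticityForm Ω mu lam del V V) := by
  obtain ⟨C, hC, korn⟩ := hKorn
  set c := min (min (2 * mu) (2 * mu + d * lam)) del
  have hc : 0 < c := lt_min (lt_min (by linarith) (by linarith)) hdel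
  refine ⟨elasticityForm_comm mu lam del Ω,
    ⟨_, fun V W hV hW => abs_elasticityForm_le mu lam del hV hW⟩, c / C, div_pos hc hC,
    fun V hV => ?_⟩
  calc c / C * h1Sq Ω V
      ≤ c / C * (C * ((∫ x in Ω, frobSq (strain V x)) + ∫ x in Ω, ‖V x‖ ^ 2)) :=
        mul_le_mul_of_nonneg_left (korn V hV) (div_pos hc hC).le
    _ = c * ((∫ x in Ω, frobSq (strain V x)) + ∫ x in Ω, ‖V x‖ ^ 2) := by field_simp
    _ ≤ elasticityForm Ω mu lam del V V := elasticityForm_self_ge mu lam del hV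

/-- Let `Ω ⊆ ℝ^d` be open and bounded (with Lipschitz
boundary, so that Korn's second inequality `hKorn` holds). If `μ > 0`,
`dλ + 2μ > 0` and `δ > 0`, then the elasticity form `a` is symmetric, bounded
and coercive on `H^1(Ω)^d`: there is `c > 0` with `a(V,V) ≥ c ‖V‖²_{H¹}`. -/
theorem elasticity_form_symmetric_bounded_coercive {d : ℕ} (hd : 0 < d)
    (Ω : Set (EuclideanSpace ℝ (Fin d))) (hΩ : IsOpen Ω)
    (hΩb : Bornology.IsBounded Ω)
    (mu lam del : ℝ) (hmu : 0 < mu) (hlam : 0 < (d : ℝ) * lam + 2 * mu)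
    (hdel : 0 < del)
    (hKorn : ∃ C : ℝ, 0 < C ∧ ∀ V, Adm Ω V →
      h1Sq Ω V ≤ C * ((∫ x in Ω, frobSq (strain V x)) + ∫ x in Ω, ‖V x‖ ^ 2)) :
    (∀ V W, elasticityForm Ω mu lam del V W = elasticityForm Ω mu lam del W V) ∧
    (∃ M : ℝ, ∀ V W, Adm Ω V → Adm Ω W →
      |elasticityForm Ω mu lam del V W| ≤
        M * Real.sqrt (h1Sq Ω V) * Real.sqrt (h1Sq Ω W)) ∧
    (∃ c : ℝ, 0 < c ∧ ∀ V, Adm Ω V →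
      c * h1Sq Ω V ≤ elasticityForm Ω mu lam del V V) :=
  elasticity_form_symmetric_bounded_coercive_general Ω mu lam del hmu hlam hdel hKorn

end
end
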